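/- (Pivoting rule) Let W⁺ and W⁻ be finite sets of points in ℝ^d, and let q be a point such that for some p ∈ convexHull(W⁺), the segment from q to p intersects convexHull(W⁻). Then every linear classifier (w,b) satisfying ⟨w,x⟩ > b for all x ∈ W⁺ and ⟨w,x⟩ < b for all x ∈ W⁻ must classify q as negative, i.e., ⟨w,q⟩ < b. -/

import Mathlib

open scoped RealInnerProductSpace

section HalfSpace

variable {E : Type*} [AddCommGroup E] [Module ℝ E] {f : E → ℝ} {s : Set E} {b : ℝ}

theorem IsLinearMap.apply_lt_of_mem_convexHull (hf : IsLinearMap ℝ f) (h : ∀ x ∈ s, f x < b) {y : E}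
    (hy : y ∈ convexHull ℝ s) : f y < b :=
  convexHull_min h (convex_halfSpace_lt hf b) hy

theorem IsLinearMap.lt_apply_of_mem_convexHull (hf : IsLinearMap ℝ f) (h : ∀ x ∈ s, b < f x) {y : E}
    (hy : y ∈ convexHull ℝ s) : b < f y :=
  convexHull_min h (convex_halfSpace_gt hf b) hy

-- If `b ≤ f q`, convexity of the half-space `{b ≤ f}` would put the whole segment in it.
theorem IsLinearMap.apply_lt_of_apply_segment_lt (hf : IsLinearMap ℝ f) {p q : E} {t : ℝ}
    (ht : t ∈ Set.Icc (0 : ℝ) 1) (hp : b ≤ f p) (hseg : f ((1 - t) • q + t • p) < b) :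
    f q < b := by
  by_contra! hq
  exact (convex_halfSpace_ge hf b hq hp (sub_nonneg.2 ht.2) ht.1 (sub_add_cancel 1 t)).not_gt hseg

end HalfSpace

/-- Pivoting rule: if the segment from `q` to some `p ∈ convexHull W⁺` meets
`convexHull W⁻`, then every linear classifier `(w,b)` with all of `W⁺` positive and
all of `W⁻` negative classifies `q` as negative. -/
theorem stmt_9 {d : ℕ} (Wp Wm : Finset (EuclideanSpace ℝ (Fin d)))
    (q p : EuclideanSpace ℝ (Fin d))
    (hp : p ∈ convexHull ℝ (Wp : Set (EuclideanSpace ℝ (Fin d))))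
    (hseg : ∃ t ∈ Set.Icc (0 : ℝ) 1,
      (1 - t) • q + t • p ∈ convexHull ℝ (Wm : Set (EuclideanSpace ℝ (Fin d))))
    (w : EuclideanSpace ℝ (Fin d)) (b : ℝ)
    (hpos : ∀ x ∈ Wp, b < ⟪w, x⟫)
    (hneg : ∀ x ∈ Wm, ⟪w, x⟫ < b) :
    ⟪w, q⟫ < b := by
  obtain ⟨t, ht, hm⟩ := hseg
  have hlin : IsLinearMap ℝ (fun x : EuclideanSpace ℝ (Fin d) => ⟪w, x⟫) :=
    (innerSL ℝ w).toLinearMap.isLinear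
  exact hlin.apply_lt_of_apply_segment_lt ht (hlin.lt_apply_of_mem_convexHull hpos hp).le
    (hlin.apply_lt_of_mem_convexHull hneg hm)
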